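/- arXiv:2210.13694 — 3 statements merged into one kernel-verified Lean document; each statement's English description precedes it below -/
import Mathlib

section
/- Let c ≥ 1 and Q ≥ 0 be real numbers, and let a : ℕ → ℝ be a sequence with a(0) = 0 such that a(l) − a(l−1) ≥ (Q − a(l−1))/c for every integer l ≥ 1. Then for every natural number L, a(L) ≥ (1 − e^{−L/c}) · Q. -/
/-!
The gap `Q - a l` to the target shrinks by the factor `1 - 1/c` at every step, so
`Q - a L ≤ (1 - 1/c)^L * Q`, and `1 - x ≤ e^{-x}` turns the geometric factor into `e^{-L/c}`.
-/

open Real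

lemma one_sub_pow_le_exp_neg_mul {x : ℝ} (hx : x ≤ 1) (n : ℕ) :
    (1 - x) ^ n ≤ exp (-(n * x)) := by
  calc (1 - x) ^ n ≤ exp (-x) ^ n := pow_le_pow_left₀ (by linarith) (one_sub_le_exp_neg x) n
    _ = exp (-(n * x)) := by rw [← exp_nat_mul, mul_neg]

lemma sub_le_one_sub_inv_pow_mul {a : ℕ → ℝ} {c Q : ℝ} (hc : 1 ≤ c)
    (hstep : ∀ n, (Q - a n) / c ≤ a (n + 1) - a n) (n : ℕ) :
    Q - a n ≤ (1 - c⁻¹) ^ n * (Q - a 0) := by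
  have hc_inv : c⁻¹ ≤ 1 := inv_le_one_of_one_le₀ hc
  refine le_geom (u := fun n => Q - a n) (by linarith) n fun k _ => ?_
  have hk := hstep k
  rw [div_eq_inv_mul] at hk
  linarith

/-- **Greedy recursion bound.** If `c ≥ 1`, `Q ≥ 0`, `a 0 = 0` and
`a l − a (l−1) ≥ (Q − a (l−1)) / c` for every `l ≥ 1`, then
`a L ≥ (1 − e^{−L/c}) · Q` for every natural number `L`. -/
theorem stmt_3 (c Q : ℝ) (hc : 1 ≤ c) (hQ : 0 ≤ Q) (a : ℕ → ℝ) (ha0 : a 0 = 0)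
    (hrec : ∀ l : ℕ, 1 ≤ l → a l - a (l - 1) ≥ (Q - a (l - 1)) / c) :
    ∀ L : ℕ, a L ≥ (1 - Real.exp (-(L : ℝ) / c)) * Q := by
  intro L
  have hstep : ∀ n, (Q - a n) / c ≤ a (n + 1) - a n := fun n => hrec (n + 1) (by omega)
  have hgap := sub_le_one_sub_inv_pow_mul hc hstep L
  have hexp : (1 - c⁻¹) ^ L ≤ exp (-(L : ℝ) / c) := by
    rw [neg_div, div_eq_mul_inv]
    exact one_sub_pow_le_exp_neg_mul (inv_le_one_of_one_le₀ hc) L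
  rw [ha0, sub_zero] at hgap
  linarith [mul_le_mul_of_nonneg_right hexp hQ]
end

section
/- Suppose f is worst-case submodular. Let ψ be a partial realization consistent with some realization in U, and let e_1, …, e_k be distinct items in E \ dom(ψ). Then there exist states o_1, …, o_k such that, setting ψ_0 = ψ and ψ_i = ψ_{i−1} ∪ {(e_i, o_i)} for 1 ≤ i ≤ k, each o_i belongs to O(e_i, ψ_{i−1}) and f(ψ_k) − f(ψ) ≤ Σ_{i=1}^{k} Δwc(e_i | ψ). -/
/-
Play the adversary greedily: give `e 1` a state attaining `Δwc(e 1 | ψ)`, and continue from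
`ψ 1 = ψ ∪ {(e 1, o 1)}`, which is again consistent with `U` and misses the remaining items.
By induction the rest of the chain gains at most `∑_{i ≥ 2} Δwc(e i | ψ 1)`, and worst-case
submodularity, applied to `ψ ⊆ ψ 1`, bounds this by `∑_{i ≥ 2} Δwc(e i | ψ)`.
-/

namespace WCAS

variable {ι O : Type*}

/-- The domain of a partial realization `ψ : ι → Option O`. -/
def dom (ψ : ι → Option O) : Set ι := {e | ψ e ≠ none}

/-- A (full) realization `φ` is consistent with a partial realization `ψ`. -/
def consistent (φ : ι → O) (ψ : ι → Option O) : Prop :=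
  ∀ e o, ψ e = some o → φ e = o

/-- `ψ` is a subrealization of `ψ'` (written `ψ ⊆ ψ'`). -/
def subreal (ψ ψ' : ι → Option O) : Prop :=
  ∀ e o, ψ e = some o → ψ' e = some o

/-- Extend a partial realization `ψ` by observing state `o` for item `e`. -/
def extendPR [DecidableEq ι] (ψ : ι → Option O) (e : ι) (o : O) : ι → Option O :=
  fun x => if x = e then some o else ψ x

/-- The empty partial realization. -/
def emptyPR : ι → Option O := fun _ => none

/-- View a full realization as a partial realization with full domain. -/
def toPR (φ : ι → O) : ι → Option O := fun e => some (φ e)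

/-- `O(e, ψ)`: the set of possible states of item `e` given observation `ψ`,
with respect to the set `U` of possible realizations. -/
def Ostates (U : Set (ι → O)) (e : ι) (ψ : ι → Option O) : Set O :=
  {o | ∃ φ ∈ U, consistent φ ψ ∧ φ e = o}

/-- The worst-case marginal utility `Δwc(e | ψ)` of item `e` on top of `ψ`. -/
noncomputable def Dwc [DecidableEq ι] (f : (ι → Option O) → ℝ) (U : Set (ι → O))
    (e : ι) (ψ : ι → Option O) : ℝ :=
  sInf ((fun o => f (extendPR ψ e o) - f ψ) '' Ostates U e ψ)

/-- `f` is worst-case monotone. -/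
def WCMonotone [DecidableEq ι] (f : (ι → Option O) → ℝ) (U : Set (ι → O)) : Prop :=
  ∀ ψ : ι → Option O, (∃ φ ∈ U, consistent φ ψ) →
    ∀ e, e ∉ dom ψ → 0 ≤ Dwc f U e ψ

/-- `f` is worst-case submodular. -/
def WCSubmodular [DecidableEq ι] (f : (ι → Option O) → ℝ) (U : Set (ι → O)) : Prop :=
  ∀ ψ ψ' : ι → Option O, subreal ψ ψ' → (∃ φ ∈ U, consistent φ ψ') →
    ∀ e, e ∉ dom ψ' → Dwc f U e ψ' ≤ Dwc f U e ψ

/-- An adaptive policy maps each observation either to an item outside its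
domain or to `none` (stop). -/
def ValidPolicy (π : (ι → Option O) → Option ι) : Prop :=
  ∀ ψ e, π ψ = some e → ψ e = none

/-- One step of executing policy `π` under realization `φ`. -/
def stepPolicy [DecidableEq ι] (π : (ι → Option O) → Option ι) (φ : ι → O)
    (ψ : ι → Option O) : ι → Option O :=
  match π ψ with
  | none => ψ
  | some e => extendPR ψ e (φ e)

/-- Executing policy `π` under realization `φ` for `n` steps, starting from the
empty observation. -/
def runPolicy [DecidableEq ι] (π : (ι → Option O) → Option ι) (φ : ι → O) :
    ℕ → ι → Option O
  | 0 => emptyPR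
  | n + 1 => stepPolicy π φ (runPolicy π φ n)

/-- The final partial realization `ψ(π, φ)` produced by executing `π` under `φ`
(a valid policy over a finite ground set terminates within `card ι` steps). -/
def finalPR [DecidableEq ι] [Fintype ι] (π : (ι → Option O) → Option ι) (φ : ι → O) :
    ι → Option O :=
  runPolicy π φ (Fintype.card ι)

open scoped Classical in
/-- The total cost `c(dom ψ)` of the items in the domain of `ψ`. -/
noncomputable def costPR [Fintype ι] (c : ι → ℝ) (ψ : ι → Option O) : ℝ :=
  ∑ e : ι, if (ψ e).isSome then c e else 0

/-- The worst-case cost `c_wc(π) = max_{φ ∈ U} c(dom ψ(π, φ))`. -/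
noncomputable def cwc [DecidableEq ι] [Fintype ι] (c : ι → ℝ) (U : Set (ι → O))
    (π : (ι → Option O) → Option ι) : ℝ :=
  sSup ((fun φ => costPR c (finalPR π φ)) '' U)

/-- The worst-case utility `f_wc(π) = min_{φ ∈ U} f(ψ(π, φ))`. -/
noncomputable def fwc [DecidableEq ι] [Fintype ι] (f : (ι → Option O) → ℝ)
    (U : Set (ι → O)) (π : (ι → Option O) → Option ι) : ℝ :=
  sInf ((fun φ => f (finalPR π φ)) '' U)

/-- `ψ` is reachable by executing `π` under some realization in `U`. -/
def Reachable [DecidableEq ι] (π : (ι → Option O) → Option ι) (U : Set (ι → O))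
    (ψ : ι → Option O) : Prop :=
  ∃ φ ∈ U, ∃ n, runPolicy π φ n = ψ

/-- Policy `π` covers the goal value `Q`: under every realization in `U`,
its final observation has utility at least `Q`. -/
def Covers [DecidableEq ι] [Fintype ι] (f : (ι → Option O) → ℝ) (U : Set (ι → O))
    (π : (ι → Option O) → Option ι) (Q : ℝ) : Prop :=
  ∀ φ ∈ U, Q ≤ f (finalPR π φ)

/-- The worst-case density-greedy policy for the cover problem with goal `Q`:
it stops at observations with `f ψ ≥ Q`, and at any reachable observation with
`f ψ < Q` it selects an item maximizing `Δwc(e | ψ) / c(e)`. -/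
def CoverGreedy [DecidableEq ι] [Fintype ι] (f : (ι → Option O) → ℝ)
    (U : Set (ι → O)) (c : ι → ℝ) (Q : ℝ) (π : (ι → Option O) → Option ι) : Prop :=
  ValidPolicy π ∧
  (∀ ψ : ι → Option O, Q ≤ f ψ → π ψ = none) ∧
  (∀ ψ : ι → Option O, Reachable π U ψ → f ψ < Q →
    ∃ e, e ∉ dom ψ ∧ π ψ = some e ∧
      ∀ e', e' ∉ dom ψ → Dwc f U e' ψ / c e' ≤ Dwc f U e ψ / c e)

/-- The budgeted worst-case density-greedy policy: at any reachable observation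
it picks a density-maximizing item and selects it if the budget permits,
stopping otherwise. -/
def BudgetGreedy [DecidableEq ι] [Fintype ι] (f : (ι → Option O) → ℝ)
    (U : Set (ι → O)) (c : ι → ℝ) (B : ℝ) (π : (ι → Option O) → Option ι) : Prop :=
  ValidPolicy π ∧
  ∀ ψ : ι → Option O, Reachable π U ψ → dom ψ ≠ Set.univ →
    ∃ e, e ∉ dom ψ ∧
      (∀ e', e' ∉ dom ψ → Dwc f U e' ψ / c e' ≤ Dwc f U e ψ / c e) ∧
      ((costPR c ψ + c e ≤ B ∧ π ψ = some e) ∨ (B < costPR c ψ + c e ∧ π ψ = none))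

/-- The relaxed budgeted worst-case density-greedy policy: it keeps selecting
density-maximizing items while the cost spent so far is within the budget
(thus also selecting the first item that makes the total cost exceed the
budget), and stops once the budget has been exceeded. -/
def RelaxedBudgetGreedy [DecidableEq ι] [Fintype ι] (f : (ι → Option O) → ℝ)
    (U : Set (ι → O)) (c : ι → ℝ) (B : ℝ) (π : (ι → Option O) → Option ι) : Prop :=
  ValidPolicy π ∧
  (∀ ψ : ι → Option O, Reachable π U ψ → B < costPR c ψ → π ψ = none) ∧
  (∀ ψ : ι → Option O, Reachable π U ψ → costPR c ψ ≤ B → dom ψ ≠ Set.univ →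
    ∃ e, e ∉ dom ψ ∧ π ψ = some e ∧
      ∀ e', e' ∉ dom ψ → Dwc f U e' ψ / c e' ≤ Dwc f U e ψ / c e)

theorem notMem_dom_iff {ψ : ι → Option O} {a : ι} : a ∉ dom ψ ↔ ψ a = none := by
  simp [dom]

section

variable [DecidableEq ι]

theorem extendPR_apply_of_ne {ψ : ι → Option O} {a b : ι} (o : O) (h : b ≠ a) :
    extendPR ψ a o b = ψ b :=
  if_neg h

theorem subreal_extendPR {ψ : ι → Option O} {a : ι} (ha : a ∉ dom ψ) (o : O) :
    subreal ψ (extendPR ψ a o) := by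
  intro b ob hb
  have hba : b ≠ a := by
    rintro rfl
    simp [notMem_dom_iff.mp ha] at hb
  rwa [extendPR_apply_of_ne o hba]

theorem notMem_dom_extendPR {ψ : ι → Option O} {a b : ι} (o : O) (hba : b ≠ a)
    (hb : b ∉ dom ψ) : b ∉ dom (extendPR ψ a o) := by
  rwa [notMem_dom_iff, extendPR_apply_of_ne o hba, ← notMem_dom_iff]

theorem exists_consistent_extendPR_of_mem_Ostates {U : Set (ι → O)} {ψ : ι → Option O}
    {a : ι} {o : O} (ho : o ∈ Ostates U a ψ) : ∃ φ ∈ U, consistent φ (extendPR ψ a o) := by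
  obtain ⟨φ, hφU, hφψ, rfl⟩ := ho
  refine ⟨φ, hφU, fun b ob hb => ?_⟩
  by_cases hba : b = a
  · subst hba
    simpa [extendPR] using hb
  · exact hφψ b ob (by rwa [extendPR_apply_of_ne _ hba] at hb)

/-- Without consistency `O(a, ψ)` is empty and `Dwc` is the junk value `sInf ∅ = 0`. -/
theorem exists_mem_Ostates_marginal_eq_Dwc [Finite O] (f : (ι → Option O) → ℝ)
    {U : Set (ι → O)} {ψ : ι → Option O} (hψ : ∃ φ ∈ U, consistent φ ψ) (a : ι) :
    ∃ o ∈ Ostates U a ψ, f (extendPR ψ a o) - f ψ = Dwc f U a ψ := by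
  obtain ⟨φ, hφU, hφψ⟩ := hψ
  have hne : ((fun o => f (extendPR ψ a o) - f ψ) '' Ostates U a ψ).Nonempty :=
    ⟨_, φ a, ⟨φ, hφU, hφψ, rfl⟩, rfl⟩
  exact hne.csInf_mem (Set.toFinite _)

end

theorem stmt_6_general {ι O : Type*} [DecidableEq ι] [Fintype O]
    (U : Set (ι → O))
    (f : (ι → Option O) → ℝ)
    (hsub : WCSubmodular f U)
    (ψ : ι → Option O) (hψ : ∃ φ ∈ U, consistent φ ψ)
    (k : ℕ) (e : Fin k → ι) (hinj : Function.Injective e)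
    (hdom : ∀ i : Fin k, e i ∉ dom ψ) :
    ∃ (o : Fin k → O) (ψs : ℕ → ι → Option O), ψs 0 = ψ ∧
      (∀ i : Fin k, ψs ((i : ℕ) + 1) = extendPR (ψs (i : ℕ)) (e i) (o i)) ∧
      (∀ i : Fin k, o i ∈ Ostates U (e i) (ψs (i : ℕ))) ∧
      f (ψs k) - f ψ ≤ ∑ i : Fin k, Dwc f U (e i) ψ := by
  induction k generalizing ψ with
  | zero => exact ⟨Fin.elim0, fun _ => ψ, rfl, fun i => i.elim0, fun i => i.elim0, by simp⟩
  | succ k ih =>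
    obtain ⟨o₀, ho₀, hstep⟩ := exists_mem_Ostates_marginal_eq_Dwc f hψ (e 0)
    set ψ₁ := extendPR ψ (e 0) o₀
    have hdom₁ : ∀ i : Fin k, e i.succ ∉ dom ψ₁ := fun i =>
      notMem_dom_extendPR o₀ (hinj.ne (Fin.succ_ne_zero i)) (hdom i.succ)
    have hψ₁ := exists_consistent_extendPR_of_mem_Ostates ho₀
    obtain ⟨o, ψs, hψs₀, hψs, ho, hsum⟩ :=
      ih ψ₁ hψ₁ (e ∘ Fin.succ) (hinj.comp (Fin.succ_injective k)) hdom₁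
    have hsub₁ : ∀ i : Fin k, Dwc f U (e i.succ) ψ₁ ≤ Dwc f U (e i.succ) ψ := fun i =>
      hsub ψ ψ₁ (subreal_extendPR (hdom 0) o₀) hψ₁ _ (hdom₁ i)
    refine ⟨Fin.cons o₀ o, fun | 0 => ψ | n + 1 => ψs n, rfl, ?_, ?_, ?_⟩
    · exact Fin.cases (by simp [hψs₀, ψ₁]) fun i => by simpa using hψs i
    · refine Fin.cases (by simpa using ho₀) fun i => ?_
      simpa only [Fin.cons_succ, Fin.val_succ, Function.comp_apply] using ho i
    · calc f (ψs k) - f ψ = (f (ψs k) - f ψ₁) + (f ψ₁ - f ψ) := by ring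
        _ ≤ ∑ i : Fin k, Dwc f U (e i.succ) ψ + Dwc f U (e 0) ψ := by
          gcongr
          · exact hsum.trans (Finset.sum_le_sum fun i _ => hsub₁ i)
          · exact hstep.le
        _ = ∑ i : Fin (k + 1), Dwc f U (e i) ψ := by rw [Fin.sum_univ_succ, add_comm]

/-- **Adversarial chain bound from worst-case submodularity.** If `f` is
worst-case submodular, `ψ` is consistent with some realization in `U`, and
`e 1, …, e k` are distinct items outside `dom ψ`, then there exist states
`o 1, …, o k` such that, with `ψ 0 = ψ` and `ψ i = ψ (i−1) ∪ {(e i, o i)}`,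
each `o i ∈ O(e i, ψ (i−1))` and
`f (ψ k) − f ψ ≤ ∑ i, Δwc(e i | ψ)`. -/
theorem stmt_6 {ι O : Type*} [Fintype ι] [Nonempty ι] [DecidableEq ι] [Fintype O]
    (U : Set (ι → O)) (hU : U.Nonempty)
    (f : (ι → Option O) → ℝ) (hf0 : ∀ ψ, 0 ≤ f ψ)
    (hsub : WCSubmodular f U)
    (ψ : ι → Option O) (hψ : ∃ φ ∈ U, consistent φ ψ)
    (k : ℕ) (e : Fin k → ι) (hinj : Function.Injective e)
    (hdom : ∀ i : Fin k, e i ∉ dom ψ) :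
    ∃ (o : Fin k → O) (ψs : ℕ → ι → Option O), ψs 0 = ψ ∧
      (∀ i : Fin k, ψs ((i : ℕ) + 1) = extendPR (ψs (i : ℕ)) (e i) (o i)) ∧
      (∀ i : Fin k, o i ∈ Ostates U (e i) (ψs (i : ℕ))) ∧
      f (ψs k) - f ψ ≤ ∑ i : Fin k, Dwc f U (e i) ψ :=
  stmt_6_general U f hsub ψ hψ k e hinj hdom

end WCAS
end

section
/- Suppose f is worst-case monotone and worst-case submodular, let Q be a real number, and let π be any adaptive policy that covers Q (i.e., f(ψ(π,φ)) ≥ Q for every φ ∈ U). Then for every partial realization ψ that is consistent with some realization in U and satisfies f(ψ) < Q, there exists an item e ∈ E \ dom(ψ) such that Δwc(e|ψ) · c_wc(π) ≥ (Q − f(ψ)) · c(e). -/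
/-!
Let `ρ` be the largest density `Δwc(e | ψ) / c(e)` over the items outside `dom ψ`. Run `π`
against an adversary that, whenever `π` selects an item `e` known neither from `ψ` nor from the
run so far, reveals a state attaining `Δwc(e | ψ ∪ ψ_run)`. By worst-case submodularity each
such step raises `f (ψ ∪ ψ_run)` by at most `Δwc(e | ψ) ≤ ρ c(e)`, so for the realization `φ`
the adversary ends up with, `f (ψ ∪ ψ(π, φ)) - f ψ ≤ ρ c(dom ψ(π, φ)) ≤ ρ c_wc(π)`. Since `π`
covers `Q`, monotonicity gives `f (ψ ∪ ψ(π, φ)) ≥ f ψ(π, φ) ≥ Q`.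
-/

namespace WCAS

variable {ι O : Type*}

section PartialRealization

variable {φ : ι → O} {ψ ψ' ψ₁ ψ₂ : ι → Option O} {e : ι}

lemma notMem_dom : e ∉ dom ψ ↔ ψ e = none := by
  simp [dom]

lemma consistent.mono (h : subreal ψ₁ ψ₂) (hφ : consistent φ ψ₂) : consistent φ ψ₁ :=
  fun e o he => hφ e o (h e o he)

lemma consistent_emptyPR : consistent φ (emptyPR : ι → Option O) :=
  fun _ _ h => nomatch h

/-- The paper's `ψ ∪ ψ'`; `ψ` takes priority, which matters only for pairs that are not
consistent with a common realization. -/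
def merge (ψ ψ' : ι → Option O) : ι → Option O := fun e => (ψ e).or (ψ' e)

lemma merge_emptyPR (ψ : ι → Option O) : merge ψ emptyPR = ψ := by
  funext e
  simp [merge, emptyPR]

lemma subreal_merge_left (ψ ψ' : ι → Option O) : subreal ψ (merge ψ ψ') := by
  intro e o he
  simp [merge, he]

lemma subreal_merge_right (h : consistent φ ψ) (h' : consistent φ ψ') :
    subreal ψ' (merge ψ ψ') := by
  intro e o he
  cases hψ : ψ e with
  | none => simp [merge, hψ, he]
  | some o' => simp [merge, hψ, ← h e o' hψ, h' e o he]

lemma consistent.merge (h : consistent φ ψ) (h' : consistent φ ψ') :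
    consistent φ (merge ψ ψ') := by
  intro e o he
  cases hψ : ψ e with
  | none => exact h' e o (by simpa [WCAS.merge, hψ] using he)
  | some o' => exact h e o (by simpa [WCAS.merge, hψ] using he)

variable [DecidableEq ι]

lemma consistent.extendPR (h : consistent φ ψ) : consistent φ (extendPR ψ e (φ e)) := by
  intro x o hx
  unfold WCAS.extendPR at hx
  split_ifs at hx with hxe
  · cases hx
    rw [hxe]
  · exact h x o hx

lemma subreal_extendPR_of_consistent (h : consistent φ ψ) :
    subreal ψ (extendPR ψ e (φ e)) := by
  intro x o hx
  unfold extendPR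
  split_ifs with hxe
  · subst hxe
    rw [h x o hx]
  · exact hx

lemma extendPR_eq_self (h : consistent φ ψ) (he : ψ e ≠ none) : extendPR ψ e (φ e) = ψ := by
  obtain ⟨o, ho⟩ := Option.ne_none_iff_exists'.mp he
  funext x
  unfold extendPR
  split_ifs with hxe
  · subst hxe
    rw [ho, h x o ho]
  · rfl

lemma merge_extendPR (h : consistent φ ψ) (ψ' : ι → Option O) :
    merge ψ (extendPR ψ' e (φ e)) = extendPR (merge ψ ψ') e (φ e) := by
  funext x
  by_cases hxe : x = e
  · subst hxe
    cases hψ : ψ x with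
    | none => simp [merge, extendPR, hψ]
    | some o => simp [merge, extendPR, hψ, h x o hψ]
  · simp [merge, extendPR, hxe]

end PartialRealization

section Cost

variable [Fintype ι] {c : ι → ℝ}

lemma costPR_emptyPR (c : ι → ℝ) : costPR c (emptyPR : ι → Option O) = 0 := by
  simp [costPR, emptyPR]

lemma costPR_mono (hc : ∀ e, 0 ≤ c e) {ψ₁ ψ₂ : ι → Option O} (h : subreal ψ₁ ψ₂) :
    costPR c ψ₁ ≤ costPR c ψ₂ := by
  refine Finset.sum_le_sum fun e _ => ?_
  split_ifs with h₁ h₂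
  · exact le_rfl
  · obtain ⟨o, ho⟩ := Option.isSome_iff_exists.mp h₁
    simp [h e o ho] at h₂
  · exact hc e
  · exact le_rfl

lemma costPR_extendPR [DecidableEq ι] {ψ : ι → Option O} {e : ι} (he : ψ e = none) (o : O) :
    costPR c (extendPR ψ e o) = costPR c ψ + c e := by
  have hterm : ∀ x, (if (extendPR ψ e o x).isSome then c x else 0) =
      (if (ψ x).isSome then c x else 0) + if x = e then c x else 0 := by
    intro x
    by_cases hxe : x = e
    · subst hxe
      simp [extendPR, he]
    · simp [extendPR, hxe]
  simp only [costPR, hterm, Finset.sum_add_distrib, Finset.sum_ite_eq', Finset.mem_univ, if_true]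

end Cost

section Marginal

variable [DecidableEq ι] [Finite O] {f : (ι → Option O) → ℝ} {U : Set (ι → O)}
  {φ : ι → O} {ψ : ι → Option O} {e : ι}

lemma Dwc_le_of_mem {o : O} (ho : o ∈ Ostates U e ψ) :
    Dwc f U e ψ ≤ f (extendPR ψ e o) - f ψ :=
  csInf_le ((Set.toFinite _).image _).bddBelow ⟨o, ho, rfl⟩

lemma exists_Dwc_eq (hne : (Ostates U e ψ).Nonempty) :
    ∃ o ∈ Ostates U e ψ, f (extendPR ψ e o) - f ψ = Dwc f U e ψ :=
  (hne.image _).csInf_mem ((Set.toFinite _).image _)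

lemma WCMonotone.le_extendPR (hmono : WCMonotone f U) (hφ : φ ∈ U) (hφψ : consistent φ ψ)
    (he : ψ e = none) : f ψ ≤ f (extendPR ψ e (φ e)) := by
  have h0 := hmono ψ ⟨φ, hφ, hφψ⟩ e (notMem_dom.mpr he)
  have h1 := Dwc_le_of_mem (f := f) ⟨φ, hφ, hφψ, rfl⟩ (e := e)
  linarith

lemma WCMonotone.le_update (hmono : WCMonotone f U) (hφ : φ ∈ U) {ψ₁ ψ₂ : ι → Option O}
    (h : subreal ψ₁ ψ₂) (hφψ : consistent φ ψ₂) (a : ι) :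
    f ψ₁ ≤ f (Function.update ψ₁ a (ψ₂ a)) := by
  cases h₁ : ψ₁ a with
  | some o => rw [h a o h₁, ← h₁, Function.update_eq_self]
  | none =>
    cases h₂ : ψ₂ a with
    | none => rw [← h₁, Function.update_eq_self]
    | some o =>
      have hext : extendPR ψ₁ a (φ a) = Function.update ψ₁ a (some o) := by
        funext x
        simp [extendPR, Function.update_apply, hφψ a o h₂]
      rw [← hext]
      exact hmono.le_extendPR hφ (hφψ.mono h) h₁

lemma WCMonotone.le_of_subreal [Fintype ι] (hmono : WCMonotone f U) (hφ : φ ∈ U)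
    {ψ₁ ψ₂ : ι → Option O} (h : subreal ψ₁ ψ₂) (hφψ : consistent φ ψ₂) : f ψ₁ ≤ f ψ₂ := by
  suffices key : ∀ (s : Finset ι) (ψ₁ : ι → Option O), subreal ψ₁ ψ₂ →
      (∀ x ∉ s, ψ₁ x = ψ₂ x) → f ψ₁ ≤ f ψ₂ from
    key Finset.univ ψ₁ h fun x hx => absurd (Finset.mem_univ x) hx
  intro s
  induction s using Finset.induction_on with
  | empty =>
    intro ψ₁ _ hout
    exact (congrArg f (funext fun x => hout x (Finset.notMem_empty x))).le
  | insert a s _ ih =>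
    intro ψ₁ hsub hout
    refine (hmono.le_update hφ hsub hφψ a).trans (ih _ ?_ ?_)
    · intro x o hx
      by_cases hxa : x = a
      · subst hxa
        simpa using hx
      · simpa [hxa] using hsub x o (by simpa [hxa] using hx)
    · intro x hx
      by_cases hxa : x = a
      · simp [hxa]
      · simpa [hxa] using hout x (by simp [hxa, hx])

end Marginal

section Run

variable [DecidableEq ι] (π : (ι → Option O) → Option ι) {φ φ' : ι → O} {n : ℕ}

lemma runPolicy_succ_of_none (h : π (runPolicy π φ n) = none) :
    runPolicy π φ (n + 1) = runPolicy π φ n := by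
  simp [runPolicy, stepPolicy, h]

lemma runPolicy_succ_of_some {e : ι} (h : π (runPolicy π φ n) = some e) :
    runPolicy π φ (n + 1) = extendPR (runPolicy π φ n) e (φ e) := by
  simp [runPolicy, stepPolicy, h]

lemma consistent_runPolicy (φ : ι → O) (n : ℕ) : consistent φ (runPolicy π φ n) := by
  induction n with
  | zero => exact consistent_emptyPR
  | succ n ih =>
    cases h : π (runPolicy π φ n) with
    | none => rwa [runPolicy_succ_of_none π h]
    | some e => rw [runPolicy_succ_of_some π h]; exact ih.extendPR

lemma subreal_runPolicy_succ (φ : ι → O) (n : ℕ) :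
    subreal (runPolicy π φ n) (runPolicy π φ (n + 1)) := by
  cases h : π (runPolicy π φ n) with
  | none => rw [runPolicy_succ_of_none π h]; exact fun _ _ => id
  | some e =>
    rw [runPolicy_succ_of_some π h]
    exact subreal_extendPR_of_consistent (consistent_runPolicy π φ n)

lemma runPolicy_eq_of_consistent (h : consistent φ' (runPolicy π φ n)) :
    runPolicy π φ' n = runPolicy π φ n := by
  induction n with
  | zero => rfl
  | succ n ih =>
    have hn := ih (h.mono (subreal_runPolicy_succ π φ n))
    cases hπ : π (runPolicy π φ n) with
    | none => rw [runPolicy_succ_of_none π (hn ▸ hπ), runPolicy_succ_of_none π hπ, hn]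
    | some e =>
      rw [runPolicy_succ_of_some π (hn ▸ hπ), runPolicy_succ_of_some π hπ, hn,
        h e (φ e) (by simp [runPolicy_succ_of_some π hπ, extendPR])]

end Run

section Adversary

variable [Fintype ι] [DecidableEq ι] [Finite O] {U : Set (ι → O)} {c : ι → ℝ}
  {f : (ι → Option O) → ℝ} {π : (ι → Option O) → Option ι} {ψ : ι → Option O} {ρ : ℝ}

lemma exists_adversarial_step (hsub : WCSubmodular f U) (hc : ∀ e, 0 ≤ c e) (hρ0 : 0 ≤ ρ)
    (hρ : ∀ e ∉ dom ψ, Dwc f U e ψ ≤ ρ * c e) {φ : ι → O} (hφ : φ ∈ U)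
    (hφψ : consistent φ ψ) (n : ℕ) :
    ∃ φ' ∈ U, consistent φ' ψ ∧
      f (merge ψ (runPolicy π φ' (n + 1))) - f (merge ψ (runPolicy π φ n)) ≤
        ρ * (costPR c (runPolicy π φ' (n + 1)) - costPR c (runPolicy π φ n)) := by
  set R := runPolicy π φ n
  have hφR : consistent φ R := consistent_runPolicy π φ n
  have hφM : consistent φ (merge ψ R) := hφψ.merge hφR
  cases hπ : π R with
  | none =>
    refine ⟨φ, hφ, hφψ, ?_⟩
    simp [runPolicy_succ_of_none π hπ, R]
  | some e =>
    by_cases hMe : merge ψ R e = none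
    · obtain ⟨hψe, hRe⟩ : ψ e = none ∧ R e = none := by simpa [merge] using hMe
      obtain ⟨o, ⟨φ', hφ'U, hφ'M, rfl⟩, hmin⟩ := exists_Dwc_eq (f := f) ⟨φ e, φ, hφ, hφM, rfl⟩
      have hφ'ψ : consistent φ' ψ := hφ'M.mono (subreal_merge_left ψ R)
      have hrun : runPolicy π φ' n = R :=
        runPolicy_eq_of_consistent π (hφ'M.mono (subreal_merge_right hφψ hφR))
      refine ⟨φ', hφ'U, hφ'ψ, ?_⟩
      rw [runPolicy_succ_of_some π (hrun ▸ hπ), hrun, merge_extendPR hφ'ψ, costPR_extendPR hRe,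
        hmin, add_sub_cancel_left]
      exact (hsub ψ _ (subreal_merge_left ψ R) ⟨φ, hφ, hφM⟩ e (notMem_dom.mpr hMe)).trans
        (hρ e (notMem_dom.mpr hψe))
    · refine ⟨φ, hφ, hφψ, ?_⟩
      rw [runPolicy_succ_of_some π hπ, merge_extendPR hφψ, extendPR_eq_self hφM hMe, sub_self]
      exact mul_nonneg hρ0 (sub_nonneg.mpr (costPR_mono hc (subreal_extendPR_of_consistent hφR)))

lemma exists_adversarial_run (hsub : WCSubmodular f U) (hc : ∀ e, 0 ≤ c e) (hρ0 : 0 ≤ ρ)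
    (hρ : ∀ e ∉ dom ψ, Dwc f U e ψ ≤ ρ * c e) (hψ : ∃ φ ∈ U, consistent φ ψ) (n : ℕ) :
    ∃ φ ∈ U, consistent φ ψ ∧
      f (merge ψ (runPolicy π φ n)) - f ψ ≤ ρ * costPR c (runPolicy π φ n) := by
  induction n with
  | zero =>
    obtain ⟨φ, hφ, hφψ⟩ := hψ
    exact ⟨φ, hφ, hφψ, by simp [runPolicy, merge_emptyPR, costPR_emptyPR]⟩
  | succ n ih =>
    obtain ⟨φ, hφ, hφψ, hle⟩ := ih
    obtain ⟨φ', hφ', hφ'ψ, hstep⟩ := exists_adversarial_step (π := π) hsub hc hρ0 hρ hφ hφψ n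
    exact ⟨φ', hφ', hφ'ψ, by linarith⟩

end Adversary

section Cover

variable [Fintype ι] [DecidableEq ι] [Finite O] {U : Set (ι → O)} {c : ι → ℝ}
  {f : (ι → Option O) → ℝ} {π : (ι → Option O) → Option ι} {Q : ℝ}

lemma costPR_finalPR_le_cwc {φ : ι → O} (hφ : φ ∈ U) : costPR c (finalPR π φ) ≤ cwc c U π :=
  le_csSup (U.toFinite.image _).bddAbove ⟨φ, hφ, rfl⟩

lemma Covers.sub_le_mul_cwc (hcov : Covers f U π Q) (hmono : WCMonotone f U)
    (hsub : WCSubmodular f U) (hc : ∀ e, 0 ≤ c e) {ψ : ι → Option O} {ρ : ℝ} (hρ0 : 0 ≤ ρ)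
    (hρ : ∀ e ∉ dom ψ, Dwc f U e ψ ≤ ρ * c e) (hψ : ∃ φ ∈ U, consistent φ ψ) :
    Q - f ψ ≤ ρ * cwc c U π := by
  obtain ⟨φ, hφ, hφψ, hgain⟩ := exists_adversarial_run (π := π) hsub hc hρ0 hρ hψ (Fintype.card ι)
  have hgain : f (merge ψ (finalPR π φ)) - f ψ ≤ ρ * costPR c (finalPR π φ) := hgain
  have hfinal : consistent φ (finalPR π φ) := consistent_runPolicy π φ _
  have hQ : Q ≤ f (merge ψ (finalPR π φ)) := (hcov φ hφ).trans
    (hmono.le_of_subreal hφ (subreal_merge_right hφψ hfinal) (hφψ.merge hfinal))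
  calc Q - f ψ ≤ ρ * costPR c (finalPR π φ) := by linarith
    _ ≤ ρ * cwc c U π := mul_le_mul_of_nonneg_left (costPR_finalPR_le_cwc hφ) hρ0

end Cover

theorem stmt_7_general {ι O : Type*} [Fintype ι] [DecidableEq ι] [Fintype O]
    (U : Set (ι → O))
    (c : ι → ℝ) (hc : ∀ e, 0 < c e)
    (f : (ι → Option O) → ℝ)
    (hmono : WCMonotone f U) (hsub : WCSubmodular f U)
    (Q : ℝ) (π : (ι → Option O) → Option ι)
    (hcov : Covers f U π Q)
    (ψ : ι → Option O) (hψ : ∃ φ ∈ U, consistent φ ψ) (hfψ : f ψ < Q) :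
    ∃ e, e ∉ dom ψ ∧ (Q - f ψ) * c e ≤ Dwc f U e ψ * cwc c U π := by
  have hc0 : ∀ e, 0 ≤ c e := fun e => (hc e).le
  obtain ⟨e, he, hmax⟩ : ∃ e ∈ {e | e ∉ dom ψ}, ∀ e' ∈ {e | e ∉ dom ψ},
      Dwc f U e' ψ / c e' ≤ Dwc f U e ψ / c e := by
    refine Set.exists_max_image _ _ (Set.toFinite _) (Set.nonempty_iff_ne_empty.mpr fun hempty => ?_)
    -- with `dom ψ = univ` the density bound holds for `ρ = 0`, forcing `Q ≤ f ψ`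
    have hρ : ∀ e ∉ dom ψ, Dwc f U e ψ ≤ 0 * c e := fun e he => (hempty.subset he).elim
    linarith [hcov.sub_le_mul_cwc hmono hsub hc0 le_rfl hρ hψ]
  have hρ : ∀ e' ∉ dom ψ, Dwc f U e' ψ ≤ Dwc f U e ψ / c e * c e' :=
    fun e' he' => (div_le_iff₀ (hc e')).mp (hmax e' he')
  have hρ0 : 0 ≤ Dwc f U e ψ / c e := div_nonneg (hmono ψ hψ e he) (hc0 e)
  refine ⟨e, he, ?_⟩
  calc (Q - f ψ) * c e ≤ Dwc f U e ψ / c e * cwc c U π * c e :=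
        mul_le_mul_of_nonneg_right (hcov.sub_le_mul_cwc hmono hsub hc0 hρ0 hρ hψ) (hc0 e)
    _ = Dwc f U e ψ * cwc c U π := by field_simp [(hc e).ne']

/-- **Key greedy inequality.** Suppose `f` is worst-case monotone and worst-case
submodular and `π` is an adaptive policy covering `Q`. Then for every partial
realization `ψ` consistent with some realization in `U` with `f ψ < Q`, there
exists an item `e ∈ E \ dom ψ` with `Δwc(e | ψ) · c_wc(π) ≥ (Q − f ψ) · c(e)`. -/
theorem stmt_7 {ι O : Type*} [Fintype ι] [Nonempty ι] [DecidableEq ι] [Fintype O]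
    (U : Set (ι → O)) (hU : U.Nonempty)
    (c : ι → ℝ) (hc : ∀ e, 0 < c e)
    (f : (ι → Option O) → ℝ) (hf0 : ∀ ψ, 0 ≤ f ψ)
    (hmono : WCMonotone f U) (hsub : WCSubmodular f U)
    (Q : ℝ) (π : (ι → Option O) → Option ι)
    (hπ : ValidPolicy π) (hcov : Covers f U π Q)
    (ψ : ι → Option O) (hψ : ∃ φ ∈ U, consistent φ ψ) (hfψ : f ψ < Q) :
    ∃ e, e ∉ dom ψ ∧ (Q - f ψ) * c e ≤ Dwc f U e ψ * cwc c U π :=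
  stmt_7_general U c hc f hmono hsub Q π hcov ψ hψ hfψ

end WCAS
end
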